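/- A local rule f of radius r is rotation-commuting if and only if for every disk D of radius r and every single vertex rotation r_u with u ∈ V(D), there exists a rotation sequence r̄ on f(D) such that f(r_u D) = r̄ f(D). (That is, to verify rotation-commutation of a local rule it suffices to check single vertex rotations.) -/

import Mathlib

open scoped Classical

/-- Ports are identified with `ZMod 3`; the fixed cyclic permutation `p_ports` is `p ↦ p + 1`. -/
abbrev Port := ZMod 3

/-- A graph on the vertex-name type `α`: a vertex set together with a set of edges,
an edge being an unordered pair of (vertex, port) pairs. -/
structure PortGraph (α : Type) where
  verts : Set α
  edges : Set (Sym2 (α × Port))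

namespace PortGraph

/-- Well-formedness: the vertex set is at most countable, edges are two-element subsets of
`V(G) × π`, and edges are pairwise non-intersecting (each pair `u:p` occurs in at most one edge). -/
def Wf {α : Type} (G : PortGraph α) : Prop :=
  G.verts.Countable ∧
  (∀ e ∈ G.edges, ¬ e.IsDiag ∧ ∀ x ∈ e, Prod.fst x ∈ G.verts) ∧
  (∀ e₁ ∈ G.edges, ∀ e₂ ∈ G.edges, ∀ x : α × Port, x ∈ e₁ → x ∈ e₂ → e₁ = e₂)

/-- Apply a port-shift `c v` at every vertex `v`: the generalized form of a rotation. -/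
def rotApply {α : Type} (c : α → Port) (G : PortGraph α) : PortGraph α :=
  ⟨G.verts, (Sym2.map fun x : α × Port => (x.1, x.2 + c x.1)) '' G.edges⟩

/-- The action of a rotation sequence (a finite multiset of vertex rotations): each occurrence of
`v` in `s` rotates the ports at `v` once by `p_ports = (· + 1)`. -/
noncomputable def rotSeq {α : Type} (s : Multiset α) (G : PortGraph α) : PortGraph α :=
  rotApply (fun v => ((s.count v : ℕ) : Port)) G

/-- The single vertex rotation `r_u`. -/
noncomputable def rot {α : Type} (u : α) (G : PortGraph α) : PortGraph α := rotSeq {u} G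

/-- Adjacency (regardless of ports). -/
def Adj {α : Type} (G : PortGraph α) (u v : α) : Prop :=
  ∃ p q : Port, s((u, p), (v, q)) ∈ G.edges

/-- `G.DistLe n u v` : the graph distance from `u` to `v` is at most `n`. -/
def DistLe {α : Type} (G : PortGraph α) : ℕ → α → α → Prop
  | 0, u, v => u = v
  | n + 1, u, v => u = v ∨ ∃ w, G.Adj u w ∧ G.DistLe n w v

/-- The ball of radius `r` around `v`. -/
def ball {α : Type} (G : PortGraph α) (v : α) (r : ℕ) : Set α := {w | G.DistLe r v w}

/-- Induced subgraph on a set of vertices. -/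
def induce {α : Type} (G : PortGraph α) (S : Set α) : PortGraph α :=
  ⟨G.verts ∩ S, {e ∈ G.edges | ∀ x ∈ e, Prod.fst x ∈ S}⟩

/-- Union of two graphs. -/
def union {α : Type} (G H : PortGraph α) : PortGraph α := ⟨G.verts ∪ H.verts, G.edges ∪ H.edges⟩

/-- Relabel the vertices of a graph along a map. -/
def map {α β : Type} (h : α → β) (G : PortGraph α) : PortGraph β :=
  ⟨h '' G.verts, (Sym2.map (Prod.map h (id : Port → Port))) '' G.edges⟩

end PortGraph

/-- The inverse of a rotation sequence (using `r_u ^ 3 = id`). -/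
noncomputable def invSeq {α : Type} (s : Multiset α) : Multiset α :=
  s.toFinset.val.bind fun u => Multiset.replicate ((3 - s.count u % 3) % 3) u

/-- Union of an indexed family of graphs. -/
def unionFam {α : Type} {ι : Sort*} (Gs : ι → PortGraph α) : PortGraph α :=
  ⟨⋃ i, (Gs i).verts, ⋃ i, (Gs i).edges⟩

/-- Two graphs are consistent when any two of their edges sharing an endpoint `u:k` are equal. -/
def Consistent {α : Type} (G H : PortGraph α) : Prop :=
  ∀ e₁ ∈ G.edges, ∀ e₂ ∈ H.edges, ∀ x : α × Port, x ∈ e₁ → x ∈ e₂ → e₁ = e₂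

/-- Subgraph relation. -/
def Subgraph {α : Type} (H G : PortGraph α) : Prop := H.verts ⊆ G.verts ∧ H.edges ⊆ G.edges

/-- A disk: a graph with a distinguished center. -/
structure Disk (α : Type) where
  graph : PortGraph α
  center : α

/-- The disk `G_v^r` of radius `r` centered at `v`: the subgraph induced by the vertices
at graph distance at most `r` from `v`, with center `v`. -/
def PortGraph.disk {α : Type} (G : PortGraph α) (v : α) (r : ℕ) : Disk α :=
  ⟨G.induce (G.ball v r), v⟩

/-- Rotation sequences act on disks by acting on the underlying graph. -/
noncomputable def rotDisk {α : Type} (s : Multiset α) (D : Disk α) : Disk α := ⟨PortGraph.rotSeq s D.graph, D.center⟩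

/-- Renaming of a disk along an isomorphism (bijective renaming of vertex names). -/
def Disk.rename {α : Type} (R : α ≃ α) (D : Disk α) : Disk α := ⟨D.graph.map R, R D.center⟩

/-- `D` is a disk of radius `r`, i.e. arises as `G_v^r` for some graph `G` and `v ∈ V(G)`. -/
def IsDisk {α : Type} (r : ℕ) (D : Disk α) : Prop :=
  ∃ G : PortGraph α, G.Wf ∧ ∃ v ∈ G.verts, D = G.disk v r

/-- Vertex names produced by a local rule: sets of pairs `u.i` with `u` an old name and
`i ∈ {ε, 1, …, b}` a suffix (`ε` encoded as `0`). -/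
abbrev NewName (α : Type) : Type := Set (α × ℕ)

/-- The action `R*` of an isomorphism on produced names: `R*({u.i, v.j, …}) = {R(u).i, R(v).j, …}`. -/
def starMap {α : Type} (R : α ≃ α) : NewName α → NewName α :=
  Set.image (Prod.map R (id : ℕ → ℕ))

/-- `f` is a local rule of radius `r`: it sends disks of radius `r` to graphs, (i) produced vertex
names are subsets of `V(D).{ε,1,…,b}` for some bound `b`, (ii) images of disks of a same graph are
consistent, (iii) `f` commutes with isomorphisms. -/
def IsLocalRule {α : Type} (r : ℕ) (f : Disk α → PortGraph (NewName α)) : Prop :=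
  (∀ D, IsDisk r D → (f D).Wf) ∧
  (∃ b : ℕ, ∀ D, IsDisk r D → ∀ w ∈ (f D).verts, ∀ x ∈ w, x.1 ∈ D.graph.verts ∧ x.2 ≤ b) ∧
  (∀ G : PortGraph α, G.Wf → ∀ u ∈ G.verts, ∀ v ∈ G.verts,
      Consistent (f (G.disk u r)) (f (G.disk v r))) ∧
  (∀ D, IsDisk r D → ∀ R : α ≃ α, f (D.rename R) = (f D).map (starMap R))

/-- The localizable dynamics (CGD) induced by a local rule: `F(G) = ⋃_{v ∈ V(G)} f(G_v^r)`. -/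
def inducedDyn {α : Type} (f : Disk α → PortGraph (NewName α)) (r : ℕ) (G : PortGraph α) :
    PortGraph (NewName α) :=
  ⟨⋃ v ∈ G.verts, (f (G.disk v r)).verts, ⋃ v ∈ G.verts, (f (G.disk v r)).edges⟩

/-- A function on graphs is rotation-commuting if every rotation sequence admits a conjugate. -/
def RotComm {α β : Type} (F : PortGraph α → PortGraph β) : Prop :=
  ∀ G : PortGraph α, G.Wf → ∀ s : Multiset α, ∃ t : Multiset β, F (PortGraph.rotSeq s G) = PortGraph.rotSeq t (F G)

/-- A local rule of radius `r` is rotation-commuting if every rotation sequence on a disk admits a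
conjugate. -/
def RotCommRule {α : Type} (r : ℕ) (f : Disk α → PortGraph (NewName α)) : Prop :=
  ∀ D : Disk α, IsDisk r D → ∀ s : Multiset α, ∃ t : Multiset (NewName α),
    f (rotDisk s D) = PortGraph.rotSeq t (f D)

/-- `w, vs` describe a path of length `n` in `G` (word `q₀p₀…` over `π²`, with `w i = (qᵢ, pᵢ)`). -/
def IsPath {α : Type} (G : PortGraph α) (n : ℕ) (w : ℕ → Port × Port) (vs : ℕ → α) : Prop :=
  ∀ i < n, s((vs i, (w i).1), (vs (i + 1), (w i).2)) ∈ G.edges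

/-- The path word `w` alternates at position `i`. -/
def AlternatesAt (w : ℕ → Port × Port) (i : ℕ) : Prop :=
  ((w i).2 = (w (i + 1)).1 + 1 ∧ (w (i + 1)).2 = (w (i + 2)).1 - 1) ∨
  ((w i).2 = (w (i + 1)).1 - 1 ∧ (w (i + 1)).2 = (w (i + 2)).1 + 1)

/-- A path word of length `n` is monotonous if it has no alternation. -/
def Monotonous (n : ℕ) (w : ℕ → Port × Port) : Prop :=
  ∀ i, i + 2 < n → ¬ AlternatesAt w i

/-- A graph is bounded-star with bound `s` if all its monotonous paths have length at most `s`. -/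
def BoundedStar {α : Type} (G : PortGraph α) (s : ℕ) : Prop :=
  ∀ n w vs, IsPath G n w vs → Monotonous n w → n ≤ s

/-- Generating relation for points of the interpretation `K(G)`:
`u:p ≡₀ v:q` iff `{u:(p+1), v:(q−1)} ∈ E(G)`. -/
def PointRel {α : Type} (G : PortGraph α) (x y : α × Port) : Prop :=
  s((x.1, x.2 + 1), (y.1, y.2 - 1)) ∈ G.edges

/-- Triangles `u` and `v` of `K(G)` share a point. -/
def SharesPoint {α : Type} (G : PortGraph α) (u v : α) : Prop :=
  ∃ p q : Port, Relation.EqvGen (PointRel G) (u, p) (v, q)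

/-- There is a monotonous path in `G` from `u` to `v`. -/
def MonPathFromTo {α : Type} (G : PortGraph α) (u v : α) : Prop :=
  ∃ n w vs, IsPath G n w vs ∧ Monotonous n w ∧ vs 0 = u ∧ vs n = v

/-!
Rotations at names that are not vertices of a graph act trivially on it. So a conjugating sequence
for `r_u` can be cut down to vertices of `f(D)`, and conversely a rotation sequence on `D` can be cut
down to vertices of `D` and conjugated one rotation at a time, since rotating a disk of radius `r`
yields a disk of radius `r` again.
-/

namespace PortGraph

variable {α : Type}

def portShift (c : α → Port) (x : α × Port) : α × Port := (x.1, x.2 + c x.1)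

lemma portShift_neg_comp (c : α → Port) : portShift (-c) ∘ portShift c = id := by
  funext x; simp [portShift]

lemma portShift_comp_neg (c : α → Port) : portShift c ∘ portShift (-c) = id := by
  funext x; simp [portShift]

lemma portShift_injective (c : α → Port) : Function.Injective (portShift c) :=
  Function.LeftInverse.injective (g := portShift (-c)) (congrFun (portShift_neg_comp c))

lemma portShift_zero : portShift (0 : α → Port) = id := by
  funext x; simp [portShift]

lemma rotApply_edges (c : α → Port) (G : PortGraph α) :
    (rotApply c G).edges = Sym2.map (portShift c) '' G.edges := rfl

lemma mem_rotApply_edges {c : α → Port} {G : PortGraph α} {e : Sym2 (α × Port)} :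
    e ∈ (rotApply c G).edges ↔ e.map (portShift (-c)) ∈ G.edges := by
  rw [rotApply_edges, Set.image_eq_preimage_of_inverse (g := Sym2.map (portShift (-c)))]
  · rfl
  · intro e; rw [Sym2.map_map, portShift_neg_comp, Sym2.map_id, id]
  · intro e; rw [Sym2.map_map, portShift_comp_neg, Sym2.map_id, id]

lemma adj_rotApply {c : α → Port} {G : PortGraph α} {u v : α} :
    (rotApply c G).Adj u v ↔ G.Adj u v := by
  simp only [Adj, mem_rotApply_edges, Sym2.map_mk, portShift]
  constructor
  · rintro ⟨p, q, h⟩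
    exact ⟨_, _, h⟩
  · rintro ⟨p, q, h⟩
    exact ⟨p + c u, q + c v, by simpa using h⟩

lemma distLe_rotApply {c : α → Port} {G : PortGraph α} (n : ℕ) (u v : α) :
    (rotApply c G).DistLe n u v ↔ G.DistLe n u v := by
  induction n generalizing u with
  | zero => rfl
  | succ n ih => simp only [DistLe, adj_rotApply, ih]

lemma ball_rotApply (c : α → Port) (G : PortGraph α) (v : α) (r : ℕ) :
    (rotApply c G).ball v r = G.ball v r :=
  Set.ext fun w => distLe_rotApply r v w

lemma rotApply_induce (c : α → Port) (G : PortGraph α) (S : Set α) :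
    rotApply c (G.induce S) = (rotApply c G).induce S := by
  refine congrArg₂ PortGraph.mk rfl (Set.ext fun e => ?_)
  simp only [induce, rotApply_edges, Set.mem_image, Set.mem_ofPred_eq]
  constructor
  · rintro ⟨e₀, ⟨he₀, hS⟩, rfl⟩
    refine ⟨⟨e₀, he₀, rfl⟩, fun x hx => ?_⟩
    obtain ⟨y, hy, rfl⟩ := Sym2.mem_map.mp hx
    exact hS y hy
  · rintro ⟨⟨e₀, he₀, rfl⟩, hS⟩
    exact ⟨e₀, ⟨he₀, fun y hy => hS (portShift c y) (Sym2.mem_map.mpr ⟨y, hy, rfl⟩)⟩, rfl⟩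

lemma Wf.rotApply {G : PortGraph α} (hG : G.Wf) (c : α → Port) : (rotApply c G).Wf := by
  obtain ⟨hcount, hedge, hdisj⟩ := hG
  refine ⟨hcount, ?_, ?_⟩
  · rintro _ ⟨e, he, rfl⟩
    refine ⟨fun hd => (hedge e he).1 ((Sym2.isDiag_map (portShift_injective c)).mp hd), ?_⟩
    intro x hx
    obtain ⟨y, hy, rfl⟩ := Sym2.mem_map.mp hx
    exact (hedge e he).2 y hy
  · rintro _ ⟨e₁, he₁, rfl⟩ _ ⟨e₂, he₂, rfl⟩ x hx₁ hx₂
    obtain ⟨y, hy, rfl⟩ := Sym2.mem_map.mp hx₁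
    obtain ⟨z, hz, hzy⟩ := Sym2.mem_map.mp hx₂
    rw [hdisj e₁ he₁ e₂ he₂ y hy (portShift_injective c hzy ▸ hz)]

lemma Wf.induce {G : PortGraph α} (hG : G.Wf) (S : Set α) : (G.induce S).Wf := by
  obtain ⟨hcount, hedge, hdisj⟩ := hG
  refine ⟨hcount.mono Set.inter_subset_left, ?_, ?_⟩
  · rintro e ⟨he, hS⟩
    exact ⟨(hedge e he).1, fun x hx => ⟨(hedge e he).2 x hx, hS x hx⟩⟩
  · rintro e₁ ⟨he₁, -⟩ e₂ ⟨he₂, -⟩ x hx₁ hx₂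
    exact hdisj e₁ he₁ e₂ he₂ x hx₁ hx₂

lemma rotApply_zero (G : PortGraph α) : rotApply 0 G = G := by
  refine congrArg₂ PortGraph.mk rfl ?_
  change Sym2.map (portShift 0) '' G.edges = G.edges
  rw [portShift_zero, Sym2.map_id, Set.image_id]

lemma rotApply_rotApply (c c' : α → Port) (G : PortGraph α) :
    rotApply c (rotApply c' G) = rotApply (c + c') G := by
  refine congrArg₂ PortGraph.mk rfl ?_
  simp only [rotApply_edges, ← Set.image_comp]
  refine Set.image_congr fun e _ => ?_
  rw [Function.comp_apply, Sym2.map_map]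
  refine Sym2.map_congr fun x _ => ?_
  simp only [Function.comp_apply, portShift, Pi.add_apply, Prod.mk.injEq, true_and]
  ring

lemma rotApply_congr {c c' : α → Port} {G : PortGraph α}
    (hG : ∀ e ∈ G.edges, ∀ x ∈ e, x.1 ∈ G.verts) (hcc : ∀ v ∈ G.verts, c v = c' v) :
    rotApply c G = rotApply c' G := by
  refine congrArg₂ PortGraph.mk rfl (Set.image_congr fun e he => Sym2.map_congr fun x hx => ?_)
  simp only [hcc x.1 (hG e he x hx)]

lemma rotSeq_zero (G : PortGraph α) : rotSeq 0 G = G := by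
  simp only [rotSeq, Multiset.count_zero, Nat.cast_zero]
  exact rotApply_zero G

lemma rotSeq_rotSeq (s t : Multiset α) (G : PortGraph α) :
    rotSeq s (rotSeq t G) = rotSeq (s + t) G := by
  simp only [rotSeq, rotApply_rotApply]
  congr 1
  funext v
  simp

lemma rotSeq_filter_mem_verts {G : PortGraph α}
    (hG : ∀ e ∈ G.edges, ∀ x ∈ e, x.1 ∈ G.verts) (s : Multiset α) :
    rotSeq (s.filter (· ∈ G.verts)) G = rotSeq s G :=
  rotApply_congr hG fun v hv => by rw [Multiset.count_filter_of_pos hv]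

lemma disk_rotSeq (s : Multiset α) (G : PortGraph α) (v : α) (r : ℕ) :
    (rotSeq s G).disk v r = rotDisk s (G.disk v r) := by
  simp only [disk, rotDisk, rotSeq, rotApply_induce, ball_rotApply]

end PortGraph

open PortGraph

section

variable {α : Type}

lemma rotDisk_zero (D : Disk α) : rotDisk 0 D = D := by
  simp [rotDisk, rotSeq_zero]

lemma rotDisk_rotDisk (s t : Multiset α) (D : Disk α) :
    rotDisk s (rotDisk t D) = rotDisk (s + t) D := by
  simp [rotDisk, rotSeq_rotSeq]

lemma IsDisk.rotDisk {r : ℕ} {D : Disk α} (hD : IsDisk r D) (s : Multiset α) :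
    IsDisk r (rotDisk s D) := by
  obtain ⟨G, hG, v, hv, rfl⟩ := hD
  exact ⟨rotSeq s G, hG.rotApply _, v, hv, (disk_rotSeq s G v r).symm⟩

lemma IsDisk.wf_graph {r : ℕ} {D : Disk α} (hD : IsDisk r D) : D.graph.Wf := by
  obtain ⟨G, hG, v, -, rfl⟩ := hD
  exact hG.induce _

lemma rotCommRule_of_rotDisk_singleton {r : ℕ} {f : Disk α → PortGraph (NewName α)}
    (h : ∀ D, IsDisk r D → ∀ u ∈ D.graph.verts,
      ∃ t : Multiset (NewName α), f (rotDisk {u} D) = rotSeq t (f D)) :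
    RotCommRule r f := by
  intro D hD s
  have hverts : ∀ s : Multiset α, (∀ u ∈ s, u ∈ D.graph.verts) →
      ∃ t, f (rotDisk s D) = rotSeq t (f D) := by
    intro s
    induction s using Multiset.induction with
    | empty => exact fun _ => ⟨0, by rw [rotDisk_zero, rotSeq_zero]⟩
    | cons u s ih =>
      intro hs
      obtain ⟨t₂, ht₂⟩ := ih fun x hx => hs x (Multiset.mem_cons_of_mem hx)
      obtain ⟨t₁, ht₁⟩ := h _ (hD.rotDisk s) u (hs u (Multiset.mem_cons_self u s))
      refine ⟨t₁ + t₂, ?_⟩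
      rw [← Multiset.singleton_add, ← rotDisk_rotDisk, ht₁, ht₂, rotSeq_rotSeq]
  obtain ⟨t, ht⟩ := hverts (s.filter (· ∈ D.graph.verts)) fun u hu => (Multiset.mem_filter.mp hu).2
  have hfilter : rotDisk (s.filter (· ∈ D.graph.verts)) D = rotDisk s D :=
    congrArg₂ Disk.mk (rotSeq_filter_mem_verts (fun e he => (hD.wf_graph.2.1 e he).2) s) rfl
  exact ⟨t, hfilter ▸ ht⟩

end

theorem stmt6_general {α : Type} (r : ℕ) (f : Disk α → PortGraph (NewName α))
    (hf : IsLocalRule r f) :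
    RotCommRule r f ↔
      ∀ D, IsDisk r D → ∀ u ∈ D.graph.verts, ∃ t : Multiset (NewName α),
        (∀ w ∈ t, w ∈ (f D).verts) ∧ f (rotDisk {u} D) = PortGraph.rotSeq t (f D) := by
  refine ⟨fun h D hD u _ => ?_, fun h => rotCommRule_of_rotDisk_singleton fun D hD u hu => ?_⟩
  · obtain ⟨t, ht⟩ := h D hD {u}
    have hedges : ∀ e ∈ (f D).edges, ∀ x ∈ e, x.1 ∈ (f D).verts :=
      fun e he => ((hf.1 D hD).2.1 e he).2
    exact ⟨t.filter (· ∈ (f D).verts), fun w hw => (Multiset.mem_filter.mp hw).2,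
      ht.trans (rotSeq_filter_mem_verts hedges t).symm⟩
  · obtain ⟨t, -, ht⟩ := h D hD u hu
    exact ⟨t, ht⟩

/-- A local rule `f` of radius `r` is rotation-commuting iff for every disk `D`
of radius `r` and every single vertex rotation `r_u` with `u ∈ V(D)` there is a rotation sequence
`r̄` on `f(D)` with `f(r_u D) = r̄ f(D)`. -/
theorem stmt6 {α : Type} [Uncountable α] (r : ℕ) (f : Disk α → PortGraph (NewName α))
    (hf : IsLocalRule r f) :
    RotCommRule r f ↔
      ∀ D, IsDisk r D → ∀ u ∈ D.graph.verts, ∃ t : Multiset (NewName α),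
        (∀ w ∈ t, w ∈ (f D).verts) ∧ f (rotDisk {u} D) = PortGraph.rotSeq t (f D) :=
  stmt6_general r f hf
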